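/- Let D be a digraph on n vertices and k ≥ 2(δ*_c(D) + 1). Then for any two k-dicolourings α, β of D there exists a redicolouring sequence from α to β in which every vertex is recoloured at most δ*_c(D) + 1 times; in particular, the diameter of the k-dicolouring graph of D is at most (δ*_c(D) + 1)·n. -/

import Mathlib

/-!
Induction on the vertex set. Pick `v` and a set `S ∌ v` meeting every dicycle through `v` with
`|S| ≤ d := δ*_c(D)`, and recolour `D - v` from `α` to `β` by induction, each vertex at most
`d + 1` times; in particular `S` is recoloured at most `d (d + 1)` times in total. Follow that
sequence in `D`. A colour of `v` absent from `S` is always legal, since every monochromatic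
dicycle through `v` would meet `S`. So `v` keeps `α v` while it is legal; when `v` has to move,
it takes a colour used neither on `S` now nor by the next `d + 1` recolourings of `S` (one
exists as `k ≥ 2d + 2`), and it moves again only once these `d + 1` recolourings have passed.
Hence `v` moves at most `d` times along the way, and once more at the end to reach `β v`.
Each step recolours a single vertex, so the length is the sum of the recolouring counts.
-/

variable {V : Type*}

/-- A directed cycle in the digraph with arc relation `A`: a nonempty list of
pairwise distinct vertices forming a closed directed walk. -/
def IsDicycle (A : V → V → Prop) (l : List V) : Prop :=
  l ≠ [] ∧ l.Nodup ∧ l.Chain' A ∧ ∀ x ∈ l.getLast?, ∀ y ∈ l.head?, A x y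

/-- The digraph with arc relation `A` has no directed cycle. -/
def Acyclic (A : V → V → Prop) : Prop := ¬ ∃ l : List V, IsDicycle A l

/-- `S` intersects every directed cycle of `A` containing `v`. -/
def HitsCyclesThrough (A : V → V → Prop) (v : V) (S : Finset V) : Prop :=
  ∀ l : List V, IsDicycle A l → v ∈ l → ∃ u ∈ l, u ∈ S

/-- The cycle-degree of `v`: the minimum size of a set `S ⊆ V \ {v}`
intersecting every directed cycle containing `v`. -/
noncomputable def cycleDegree (A : V → V → Prop) (v : V) : ℕ :=
  sInf { n | ∃ S : Finset V, S.card = n ∧ v ∉ S ∧ HitsCyclesThrough A v S }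

/-- `(U, E)` is a (nonempty) subdigraph of the digraph on `V` with arcs `A`. -/
def IsSubdigraph (A : V → V → Prop) (U : Finset V) (E : Finset (V × V)) : Prop :=
  U.Nonempty ∧ ∀ p ∈ E, A p.1 p.2 ∧ p.1 ∈ U ∧ p.2 ∈ U

/-- The arc relation of a finite arc set. -/
def arcRel (E : Finset (V × V)) : V → V → Prop := fun x y => (x, y) ∈ E

/-- The cycle-degeneracy of the digraph `A`: the maximum, over all subdigraphs,
of the minimum cycle-degree. -/
noncomputable def cycleDegeneracy (A : V → V → Prop) : ℕ :=
  sSup { m | ∃ (U : Finset V) (E : Finset (V × V)),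
    IsSubdigraph A U E ∧ ∀ v ∈ U, m ≤ cycleDegree (arcRel E) v }

/-- A dicolouring: every colour class induces an acyclic subdigraph. -/
def IsDicolouring {C : Type*} (A : V → V → Prop) (φ : V → C) : Prop :=
  ∀ c : C, Acyclic fun x y => A x y ∧ φ x = c ∧ φ y = c

/-- The dichromatic number: least `k` admitting a `k`-dicolouring. -/
noncomputable def dichromaticNumber (A : V → V → Prop) : ℕ :=
  sInf { k | ∃ φ : V → Fin k, IsDicolouring A φ }

/-- One step in the `k`-dicolouring graph: both are dicolourings and they
differ on exactly one vertex. -/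
def DicolStep (A : V → V → Prop) {k : ℕ} (α β : V → Fin k) : Prop :=
  IsDicolouring A α ∧ IsDicolouring A β ∧ ∃! v, α v ≠ β v

/-- `l` is (the list of successive colourings of) a redicolouring sequence from
`α` to `β`. -/
def RedicolPath (A : V → V → Prop) {k : ℕ} (α β : V → Fin k)
    (l : List (V → Fin k)) : Prop :=
  List.Chain (DicolStep A) α l ∧ (α :: l).getLast (List.cons_ne_nil _ _) = β

/-- The number of times vertex `v` is recoloured along the sequence of
colourings `l`. -/
def countRecol {k : ℕ} (v : V) (l : List (V → Fin k)) : ℕ :=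
  (l.zip l.tail).countP fun p => decide (p.1 v ≠ p.2 v)

open Function Finset

section Dicycles
variable {R R' : V → V → Prop} {l : List V}

lemma IsDicycle.exists_mem_rel (h : IsDicycle R l) {x : V} (hx : x ∈ l) : ∃ y ∈ l, R x y := by
  obtain ⟨hne, -, hchain, hclose⟩ := h
  obtain ⟨i, hi, rfl⟩ := List.getElem_of_mem hx
  by_cases hlast : i + 1 < l.length
  · exact ⟨l[i + 1], List.getElem_mem _, List.isChain_iff_getElem.mp hchain i hlast⟩
  · refine ⟨l.head hne, List.head_mem hne, hclose _ ?_ _ (List.head?_eq_some_head hne)⟩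
    rw [List.getLast?_eq_getElem?, List.getElem?_eq_getElem (by omega)]
    congr 2
    omega

lemma IsDicycle.mono_of_mem (h : IsDicycle R l) (H : ∀ a ∈ l, ∀ b ∈ l, R a b → R' a b) :
    IsDicycle R' l := by
  obtain ⟨hne, hnodup, hchain, hclose⟩ := h
  refine ⟨hne, hnodup, ?_, fun x hx y hy =>
    H x (List.mem_of_mem_getLast? hx) y (List.mem_of_mem_head? hy) (hclose x hx y hy)⟩
  change List.IsChain R l at hchain
  change List.IsChain R' l
  rw [List.isChain_iff_getElem] at hchain ⊢
  exact fun i hi => H _ (List.getElem_mem _) _ (List.getElem_mem _) (hchain i hi)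

lemma IsDicycle.mono (h : IsDicycle R l) (H : ∀ a b, R a b → R' a b) : IsDicycle R' l :=
  h.mono_of_mem fun a _ b _ => H a b

lemma IsDicolouring.mono {C : Type*} {φ : V → C} (h : IsDicolouring R φ)
    (H : ∀ a b, R' a b → R a b) : IsDicolouring R' φ :=
  fun c ⟨l, hl⟩ => h c ⟨l, hl.mono fun a b hab => ⟨H a b hab.1, hab.2⟩⟩

lemma IsDicolouring.not_rel_self {C : Type*} {φ : V → C} (h : IsDicolouring R φ) (u : V) :
    ¬ R u u := fun hu =>
  h (φ u) ⟨[u], by simp, by simp, List.isChain_singleton u, by simp [hu]⟩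

end Dicycles

def inducedRel (A : V → V → Prop) (U : Finset V) : V → V → Prop :=
  fun x y => A x y ∧ x ∈ U ∧ y ∈ U

section Induced
variable {A : V → V → Prop} {U : Finset V}

lemma inducedRel_univ [Fintype V] (A : V → V → Prop) : inducedRel A univ = A := by
  funext x y
  simp [inducedRel]

lemma inducedRel_mono {U' : Finset V} (h : U' ⊆ U) (a b : V) :
    inducedRel A U' a b → inducedRel A U a b :=
  fun hab => ⟨hab.1, h hab.2.1, h hab.2.2⟩

lemma IsDicycle.mem_of_inducedRel {l : List V} (h : IsDicycle (inducedRel A U) l) {x : V}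
    (hx : x ∈ l) : x ∈ U := by
  obtain ⟨y, -, hxy⟩ := h.exists_mem_rel hx
  exact hxy.2.1

variable [DecidableEq V] {k : ℕ} {φ : V → Fin k} {v : V}

lemma IsDicolouring.update_of_notMem (hφ : IsDicolouring (inducedRel A U) φ) (hv : v ∉ U)
    (c : Fin k) : IsDicolouring (inducedRel A U) (update φ v c) := by
  refine fun c' ⟨l, hl⟩ => hφ c' ⟨l, hl.mono_of_mem fun a ha b hb hab => ?_⟩
  have hav : a ≠ v := fun h => hv (h ▸ (hl.mono fun _ _ h => h.1).mem_of_inducedRel ha)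
  have hbv : b ≠ v := fun h => hv (h ▸ (hl.mono fun _ _ h => h.1).mem_of_inducedRel hb)
  simpa [update_of_ne hav, update_of_ne hbv] using hab

lemma IsDicolouring.update_of_hitsCyclesThrough {S : Finset V} {y : Fin k}
    (hφ : IsDicolouring (inducedRel A (U.erase v)) φ) (hS : HitsCyclesThrough (inducedRel A U) v S)
    (hvS : v ∉ S) (hy : y ∉ S.image φ) : IsDicolouring (inducedRel A U) (update φ v y) := by
  intro c ⟨l, hl⟩
  have hlU : IsDicycle (inducedRel A U) l := hl.mono fun _ _ h => h.1
  have hcol : ∀ x ∈ l, update φ v y x = c := fun x hx => by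
    obtain ⟨_, -, hxy⟩ := hl.exists_mem_rel hx
    exact hxy.2.1
  by_cases hvl : v ∈ l
  · obtain ⟨u, hul, huS⟩ := hS l hlU hvl
    have huv : u ≠ v := fun h => hvS (h ▸ huS)
    have hu := hcol u hul
    have hv := hcol v hvl
    rw [update_self] at hv
    rw [update_of_ne huv, ← hv] at hu
    exact hy (mem_image.mpr ⟨u, huS, hu⟩)
  · refine hφ c ⟨l, hl.mono_of_mem fun a ha b hb hab => ?_⟩
    have hav : a ≠ v := fun h => hvl (h ▸ ha)
    have hbv : b ≠ v := fun h => hvl (h ▸ hb)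
    simp only [update_of_ne hav, update_of_ne hbv] at hab
    exact ⟨⟨hab.1.1, mem_erase.mpr ⟨hav, hab.1.2.1⟩, mem_erase.mpr ⟨hbv, hab.1.2.2⟩⟩, hab.2⟩

end Induced

section Recolourings
variable {k : ℕ}

@[simp] lemma countRecol_singleton (u : V) (φ : V → Fin k) : countRecol u [φ] = 0 := rfl

lemma countRecol_cons_cons (u : V) (φ ψ : V → Fin k) (l : List (V → Fin k)) :
    countRecol u (φ :: ψ :: l) = (if φ u ≠ ψ u then 1 else 0) + countRecol u (ψ :: l) := by
  simp only [countRecol, List.tail_cons, List.zip_cons_cons, List.countP_cons, decide_not]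
  split_ifs <;> simp_all [add_comm]

lemma countRecol_cons_cons_eq_zero {v : V} {φ ψ : V → Fin k} {l : List (V → Fin k)} :
    countRecol v (φ :: ψ :: l) = 0 ↔ φ v = ψ v ∧ countRecol v (ψ :: l) = 0 := by
  rw [countRecol_cons_cons]
  by_cases h : φ v = ψ v <;> simp [h]

lemma length_eq_sum_countRecol [Fintype V] {R : V → V → Prop} :
    ∀ {φ : V → Fin k} {l : List (V → Fin k)}, List.IsChain (DicolStep R) (φ :: l) →
      l.length = ∑ w, countRecol w (φ :: l)
  | _, [], _ => by simp
  | φ, ψ :: l, hl => by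
    obtain ⟨⟨-, -, u, hu, huniq⟩, hl⟩ := List.isChain_cons_cons.mp hl
    have hone : ∑ w, (if φ w ≠ ψ w then 1 else 0) = 1 := by
      rw [sum_ite, sum_const_zero, add_zero, sum_const, smul_eq_mul, mul_one, card_eq_one]
      exact ⟨u, by ext w; simpa using ⟨fun hw => huniq w hw, fun hw => hw ▸ hu⟩⟩
    simp only [countRecol_cons_cons, sum_add_distrib, hone, List.length_cons,
      length_eq_sum_countRecol hl, add_comm]

def recolouringsOn (S : Finset V) (L : List (V → Fin k)) : ℕ := ∑ u ∈ S, countRecol u L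

variable {S : Finset V} {φ ψ : V → Fin k}

lemma recolouringsOn_cons_cons (l : List (V → Fin k)) :
    recolouringsOn S (φ :: ψ :: l) = recolouringsOn S [φ, ψ] + recolouringsOn S (ψ :: l) := by
  simp only [recolouringsOn, countRecol_cons_cons, sum_add_distrib, countRecol_singleton,
    add_zero]

lemma recolouringsOn_pair (S : Finset V) (φ ψ : V → Fin k) :
    recolouringsOn S [φ, ψ] = (S.filter fun u => φ u ≠ ψ u).card := by
  simp [recolouringsOn, countRecol_cons_cons, card_filter]

lemma recolouringsOn_pair_le_one (h : ∃! u, φ u ≠ ψ u) : recolouringsOn S [φ, ψ] ≤ 1 := by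
  obtain ⟨u, -, huniq⟩ := h
  rw [recolouringsOn_pair]
  exact (card_le_card fun w hw => mem_singleton.mpr (huniq w (mem_filter.mp hw).2)).trans
    (card_singleton u).le

lemma card_image_sdiff_le_recolouringsOn_pair :
    (S.image φ \ S.image ψ).card ≤ recolouringsOn S [φ, ψ] := by
  rw [recolouringsOn_pair]
  refine (card_le_card fun c hc => ?_).trans (card_image_le (f := φ))
  obtain ⟨hcφ, hcψ⟩ := mem_sdiff.mp hc
  obtain ⟨u, hu, rfl⟩ := mem_image.mp hcφ
  exact mem_image.mpr ⟨u, mem_filter.mpr ⟨hu, fun h => hcψ (mem_image.mpr ⟨u, hu, h.symm⟩)⟩, rfl⟩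

end Recolourings

section UpcomingColours
variable {k : ℕ} (S : Finset V)

/-- The colours taken by `S` along `φ :: l` until `S` has been recoloured more than `j` times. -/
def upcomingColours : ℕ → (V → Fin k) → List (V → Fin k) → Finset (Fin k)
  | _, φ, [] => S.image φ
  | j, φ, ψ :: l => S.image φ ∪
      if recolouringsOn S [φ, ψ] ≤ j then upcomingColours (j - recolouringsOn S [φ, ψ]) ψ l
      else ∅

variable {S}

lemma image_subset_upcomingColours (j : ℕ) (φ : V → Fin k) (l : List (V → Fin k)) :
    S.image φ ⊆ upcomingColours S j φ l := by
  cases l <;> simp [upcomingColours]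

lemma card_upcomingColours_le :
    ∀ (j : ℕ) (φ : V → Fin k) (l : List (V → Fin k)),
      (upcomingColours S j φ l).card ≤ S.card + j
  | j, φ, [] => card_image_le.trans (Nat.le_add_right _ _)
  | j, φ, ψ :: l => by
    rw [upcomingColours]
    split_ifs with hj
    · set X := upcomingColours S (j - recolouringsOn S [φ, ψ]) ψ l
      have hsdiff : (S.image φ \ X).card ≤ recolouringsOn S [φ, ψ] :=
        (card_le_card (sdiff_subset_sdiff subset_rfl (image_subset_upcomingColours _ ψ l))).trans
          card_image_sdiff_le_recolouringsOn_pair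
      have hX : X.card ≤ S.card + (j - recolouringsOn S [φ, ψ]) :=
        card_upcomingColours_le _ ψ l
      rw [← card_sdiff_add_card]
      omega
    · simpa using card_image_le.trans (Nat.le_add_right _ _)

end UpcomingColours

section Lifts
variable [DecidableEq V] {k : ℕ}

/-- `l'` is a redicolouring sequence of `R` that follows `φ :: l` away from `v`, while `v` starts
with colour `y` and ends with colour `b`. -/
def IsLift (R : V → V → Prop) (v : V) (φ : V → Fin k) (l : List (V → Fin k)) (y b : Fin k)
    (l' : List (V → Fin k)) : Prop :=
  RedicolPath R (update φ v y) (update ((φ :: l).getLast (List.cons_ne_nil _ _)) v b) l' ∧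
    ∀ w ≠ v, countRecol w (update φ v y :: l') = countRecol w (φ :: l)

variable {R : V → V → Prop} {v : V} {φ ψ : V → Fin k} {l l' : List (V → Fin k)} {y y' b : Fin k}

lemma isLift_nil (R : V → V → Prop) (v : V) (φ : V → Fin k) (b : Fin k) :
    IsLift R v φ [] b b [] :=
  ⟨⟨List.isChain_singleton _, rfl⟩, fun _ _ => rfl⟩

lemma IsLift.cons (h : IsLift R v ψ l y b l') (hstep : ∃! u, φ u ≠ ψ u) (hv : φ v = ψ v)
    (hφ : IsDicolouring R (update φ v y)) (hψ : IsDicolouring R (update ψ v y)) :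
    IsLift R v φ (ψ :: l) y b (update ψ v y :: l') := by
  obtain ⟨⟨hchain, hlast⟩, hcount⟩ := h
  obtain ⟨u, hu, huniq⟩ := hstep
  have huv : u ≠ v := fun h => hu (h ▸ hv)
  refine ⟨⟨List.IsChain.cons_cons ⟨hφ, hψ, u, ?_, fun w hw => huniq w ?_⟩ hchain, hlast⟩,
    fun w hw => ?_⟩
  · simpa [update_of_ne huv] using hu
  · rcases eq_or_ne w v with rfl | hwv
    · simp at hw
    · simpa [update_of_ne hwv] using hw
  · rw [countRecol_cons_cons, countRecol_cons_cons, hcount w hw, update_of_ne hw,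
      update_of_ne hw]

lemma countRecol_update_cons_update (v : V) (y : Fin k) (φ ψ : V → Fin k) :
    countRecol v (update φ v y :: update ψ v y :: l) = countRecol v (update ψ v y :: l) := by
  simp [countRecol_cons_cons]

lemma IsLift.recolour (h : IsLift R v φ l y' b l') (hy : IsDicolouring R (update φ v y))
    (hy' : IsDicolouring R (update φ v y')) :
    ∃ l'', IsLift R v φ l y b l'' ∧
      countRecol v (update φ v y :: l'') ≤ countRecol v (update φ v y' :: l') + 1 := by
  obtain rfl | hne := eq_or_ne y y'
  · exact ⟨l', h, Nat.le_succ _⟩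
  obtain ⟨⟨hchain, hlast⟩, hcount⟩ := h
  refine ⟨update φ v y' :: l', ⟨⟨List.IsChain.cons_cons ⟨hy, hy', v, by simpa, fun w hw => ?_⟩
    hchain, hlast⟩, fun w hw => ?_⟩, ?_⟩
  · by_contra hwv
    simp [update_of_ne hwv] at hw
  · rw [countRecol_cons_cons, hcount w hw]
    simp [update_of_ne hw]
  · rw [countRecol_cons_cons, add_comm]
    simp [hne]

end Lifts

lemma mul_sub_one_le_of_mul_sub_two_le {c r d : ℕ} (hr : 1 ≤ r)
    (h : (d + 1) * (c - 2) ≤ r - (d + 1) + d) : (d + 1) * (c - 1) ≤ r + d := by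
  have hmul : (d + 1) * (c - 1) ≤ (d + 1) * (c - 2) + (d + 1) := by
    rw [← Nat.mul_succ]
    exact Nat.mul_le_mul_left _ (by omega)
  rcases Nat.lt_or_ge r (d + 1) with hrd | hrd
  · have : c - 2 < 1 := Nat.lt_of_mul_lt_mul_left (a := d + 1) (by omega)
    rw [show c - 2 = 0 by omega, mul_zero] at hmul
    omega
  · omega

lemma le_add_one_of_mul_sub_two_le {c r d : ℕ} (hd : 1 ≤ d) (hr : r ≤ d * (d + 1))
    (h : (d + 1) * (c - 2) ≤ r - (d + 1) + d) : c ≤ d + 1 := by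
  have hlt : (d + 1) * (c - 2) < (d + 1) * d := by
    have : d + 1 ≤ d * (d + 1) := by nlinarith
    have : r - (d + 1) + d < d * (d + 1) := by omega
    nlinarith
  have := Nat.lt_of_mul_lt_mul_left hlt
  omega

section LiftingPaths
variable [DecidableEq V] {A : V → V → Prop} {U S : Finset V} {v : V} {k d : ℕ} {b : Fin k}

/-- A move of `v` just before the step `φ → ψ`: `v` takes a colour that `S` avoids now and
during its next `d + 1` recolourings, and `ih` (the budgeted lift of the rest, i.e.
`exists_isLift_of_notMem_upcomingColours`) takes over from there. -/
lemma exists_isLift_cons_recolour (hS : HitsCyclesThrough (inducedRel A U) v S) (hvS : v ∉ S)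
    (hSd : S.card ≤ d) (hk : 2 * (d + 1) ≤ k) {φ ψ : V → Fin k} {l : List (V → Fin k)}
    {y : Fin k}
    (ih : ∀ y' j, y' ∉ upcomingColours S j ψ l → ∃ l', IsLift (inducedRel A U) v ψ l y' b l' ∧
      (d + 1) * (countRecol v (update ψ v y' :: l') - 1) ≤ (recolouringsOn S (ψ :: l) - j) + d)
    (hstep : DicolStep (inducedRel A (U.erase v)) φ ψ) (hv : φ v = ψ v)
    (hy : IsDicolouring (inducedRel A U) (update φ v y)) :
    ∃ l', IsLift (inducedRel A U) v φ (ψ :: l) y b l' ∧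
      (d + 1) * (countRecol v (update φ v y :: l') - 2) ≤
        (recolouringsOn S (φ :: ψ :: l) - (d + 1)) + d := by
  obtain ⟨hφ, hψ, hdiff⟩ := hstep
  have hr₁ := recolouringsOn_pair_le_one (S := S) hdiff
  obtain ⟨y', -, hy'⟩ := exists_mem_notMem_of_card_lt_card
    (s := upcomingColours S (d + 1) φ (ψ :: l)) (t := univ) <| by
      have := card_upcomingColours_le (S := S) (d + 1) φ (ψ :: l)
      rw [card_univ, Fintype.card_fin]
      omega
  rw [upcomingColours, if_pos (by omega), mem_union, not_or] at hy'
  obtain ⟨hy'φ, hy'ψ⟩ := hy'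
  obtain ⟨l', hlift, hbound⟩ := ih y' _ hy'ψ
  have hφy' := hφ.update_of_hitsCyclesThrough hS hvS hy'φ
  have hψy' := hψ.update_of_hitsCyclesThrough hS hvS
    fun h => hy'ψ (image_subset_upcomingColours _ _ _ h)
  obtain ⟨l'', hlift', hcount⟩ := (hlift.cons hdiff hv hφy' hψy').recolour hy hφy'
  refine ⟨l'', hlift', ?_⟩
  rw [countRecol_update_cons_update] at hcount
  rw [recolouringsOn_cons_cons]
  calc (d + 1) * (countRecol v (update φ v y :: l'') - 2)
      ≤ (d + 1) * (countRecol v (update ψ v y' :: l') - 1) :=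
        Nat.mul_le_mul_left _ (by omega)
    _ ≤ _ := hbound
    _ = _ := by omega

/-- `v` keeps `y` while the budget `j` lasts and then moves; between two moves `S` is recoloured at
least `d + 1` times. -/
lemma exists_isLift_of_notMem_upcomingColours (hS : HitsCyclesThrough (inducedRel A U) v S)
    (hvS : v ∉ S) (hSd : S.card ≤ d) (hk : 2 * (d + 1) ≤ k) :
    ∀ {φ : V → Fin k} {l : List (V → Fin k)} {y : Fin k} {j : ℕ},
      IsDicolouring (inducedRel A (U.erase v)) φ →
      List.IsChain (DicolStep (inducedRel A (U.erase v))) (φ :: l) → countRecol v (φ :: l) = 0 →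
      IsDicolouring (inducedRel A U) (update ((φ :: l).getLast (List.cons_ne_nil _ _)) v b) →
      y ∉ upcomingColours S j φ l →
      ∃ l', IsLift (inducedRel A U) v φ l y b l' ∧
        (d + 1) * (countRecol v (update φ v y :: l') - 1) ≤ (recolouringsOn S (φ :: l) - j) + d
  | φ, [], y, j, hφ, _, _, hb, hy => by
    obtain ⟨l', hlift, hcount⟩ :=
      (isLift_nil _ v φ b).recolour (hφ.update_of_hitsCyclesThrough hS hvS hy) hb
    refine ⟨l', hlift, ?_⟩
    simp only [countRecol_singleton] at hcount
    simp [Nat.sub_eq_zero_of_le hcount]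
  | φ, ψ :: l, y, j, hφ, hl, hv, hb, hy => by
    obtain ⟨hstep, hl⟩ := List.isChain_cons_cons.mp hl
    obtain ⟨hvψ, hv⟩ := countRecol_cons_cons_eq_zero.mp hv
    rw [List.getLast_cons (List.cons_ne_nil _ _)] at hb
    have ih := fun y' j' => exists_isLift_of_notMem_upcomingColours (y := y') (j := j')
      hS hvS hSd hk hstep.2.1 hl hv hb
    have hr₁ := recolouringsOn_pair_le_one (S := S) hstep.2.2
    rw [upcomingColours, mem_union, not_or] at hy
    obtain ⟨hyφ, hyψ⟩ := hy
    have hφy := hstep.1.update_of_hitsCyclesThrough hS hvS hyφ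
    rw [recolouringsOn_cons_cons]
    split_ifs at hyψ with hj
    · obtain ⟨l', hlift, hbound⟩ := ih y _ hyψ
      have hψy := hstep.2.1.update_of_hitsCyclesThrough hS hvS
        fun h => hyψ (image_subset_upcomingColours _ _ _ h)
      refine ⟨_, hlift.cons hstep.2.2 hvψ hφy hψy, ?_⟩
      rw [countRecol_update_cons_update]
      exact hbound.trans_eq (by omega)
    · obtain rfl : j = 0 := by omega
      obtain ⟨l', hlift, hbound⟩ := exists_isLift_cons_recolour hS hvS hSd hk ih hstep hvψ hφy
      rw [recolouringsOn_cons_cons] at hbound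
      exact ⟨l', hlift, mul_sub_one_le_of_mul_sub_two_le (by omega) hbound⟩

/-- `v` keeps `y` as long as this is legal; the first time it is blocked it moves, and the budgeted
lift takes over. -/
lemma exists_isLift_of_isDicolouring_update (hS : HitsCyclesThrough (inducedRel A U) v S)
    (hvS : v ∉ S) (hSd : S.card ≤ d) (hk : 2 * (d + 1) ≤ k) :
    ∀ {φ : V → Fin k} {l : List (V → Fin k)} {y : Fin k},
      IsDicolouring (inducedRel A (U.erase v)) φ →
      List.IsChain (DicolStep (inducedRel A (U.erase v))) (φ :: l) → countRecol v (φ :: l) = 0 →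
      IsDicolouring (inducedRel A U) (update ((φ :: l).getLast (List.cons_ne_nil _ _)) v b) →
      recolouringsOn S (φ :: l) ≤ d * (d + 1) →
      IsDicolouring (inducedRel A U) (update φ v y) →
      ∃ l', IsLift (inducedRel A U) v φ l y b l' ∧ countRecol v (update φ v y :: l') ≤ d + 1
  | φ, [], y, _, _, _, hb, _, hy => by
    obtain ⟨l', hlift, hcount⟩ := (isLift_nil _ v φ b).recolour hy hb
    simp only [countRecol_singleton] at hcount
    exact ⟨l', hlift, by omega⟩
  | φ, ψ :: l, y, _, hl, hv, hb, hr, hy => by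
    obtain ⟨hstep, hl⟩ := List.isChain_cons_cons.mp hl
    obtain ⟨hvψ, hv⟩ := countRecol_cons_cons_eq_zero.mp hv
    rw [List.getLast_cons (List.cons_ne_nil _ _)] at hb
    rw [recolouringsOn_cons_cons] at hr
    by_cases hψy : IsDicolouring (inducedRel A U) (update ψ v y)
    · obtain ⟨l', hlift, hcount⟩ := exists_isLift_of_isDicolouring_update hS hvS hSd hk
        hstep.2.1 hl hv hb (by omega) hψy
      refine ⟨_, hlift.cons hstep.2.2 hvψ hy hψy, ?_⟩
      rwa [countRecol_update_cons_update]
    · have hd : 1 ≤ d := by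
        by_contra! hd0
        have hS0 : S = ∅ := card_eq_zero.mp (by omega)
        exact hψy (hstep.2.1.update_of_hitsCyclesThrough hS hvS (by simp [hS0]))
      obtain ⟨l', hlift, hbound⟩ := exists_isLift_cons_recolour hS hvS hSd hk
        (fun y' j hy' => exists_isLift_of_notMem_upcomingColours hS hvS hSd hk hstep.2.1 hl hv hb
          hy') hstep hvψ hy
      rw [recolouringsOn_cons_cons] at hbound
      exact ⟨l', hlift, le_add_one_of_mul_sub_two_le hd hr hbound⟩

end LiftingPaths

section LowVertex
variable [Fintype V]

lemma cycleDegree_le_card (R : V → V → Prop) (v : V) : cycleDegree R v ≤ Fintype.card V := by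
  rcases Set.eq_empty_or_nonempty
    {n | ∃ S : Finset V, S.card = n ∧ v ∉ S ∧ HitsCyclesThrough R v S} with h | ⟨_, S, rfl, hS⟩
  · simp [cycleDegree, h]
  · unfold cycleDegree
    exact le_trans (Nat.sInf_le ⟨S, rfl, hS⟩) S.card_le_univ

lemma exists_hitsCyclesThrough_card_eq_cycleDegree {R : V → V → Prop} {v : V} (hv : ¬ R v v) :
    ∃ S : Finset V, S.card = cycleDegree R v ∧ v ∉ S ∧ HitsCyclesThrough R v S := by
  classical
  have hne : {n | ∃ S : Finset V, S.card = n ∧ v ∉ S ∧ HitsCyclesThrough R v S}.Nonempty := by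
    refine ⟨_, univ.erase v, rfl, notMem_erase v _, fun l hl hvl => ?_⟩
    by_contra! h
    obtain ⟨y, hy, hvy⟩ := hl.exists_mem_rel hvl
    obtain rfl : y = v := by simpa using h y hy
    exact hv hvy
  exact Nat.sInf_mem hne

lemma exists_hitsCyclesThrough_card_le_cycleDegeneracy {A : V → V → Prop} {U : Finset V}
    (hU : U.Nonempty) (hloop : ∀ u, ¬ inducedRel A U u u) :
    ∃ v ∈ U, ∃ S : Finset V, v ∉ S ∧ S.card ≤ cycleDegeneracy A ∧
      HitsCyclesThrough (inducedRel A U) v S := by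
  classical
  set E := (U ×ˢ U).filter fun p => A p.1 p.2
  have hE : arcRel E = inducedRel A U := by
    funext x y
    simp [arcRel, inducedRel, E, and_comm]
  by_contra! h
  have hmem : cycleDegeneracy A + 1 ∈ {m | ∃ (U : Finset V) (E : Finset (V × V)),
      IsSubdigraph A U E ∧ ∀ v ∈ U, m ≤ cycleDegree (arcRel E) v} := by
    refine ⟨U, E, ⟨hU, fun p hp => by simpa [E, and_comm] using hp⟩, fun v hv => ?_⟩
    obtain ⟨S, hcard, hvS, hS⟩ :=
      exists_hitsCyclesThrough_card_eq_cycleDegree (R := arcRel E) (by rw [hE]; exact hloop v)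
    rw [hE] at hS
    by_contra! hlt
    exact h v hv S hvS (by omega) hS
  have hbdd : BddAbove {m | ∃ (U : Finset V) (E : Finset (V × V)),
      IsSubdigraph A U E ∧ ∀ v ∈ U, m ≤ cycleDegree (arcRel E) v} := by
    refine ⟨Fintype.card V, ?_⟩
    rintro m ⟨U, E, ⟨⟨v, hv⟩, -⟩, hm⟩
    exact (hm v hv).trans (cycleDegree_le_card _ v)
  have := le_csSup hbdd hmem
  rw [← cycleDegeneracy] at this
  omega

end LowVertex

section Redicolouring
variable [Fintype V] [DecidableEq V] {A : V → V → Prop} {k : ℕ}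

theorem exists_redicolPath_inducedRel (hk : 2 * (cycleDegeneracy A + 1) ≤ k) (U : Finset V) :
    ∀ α β : V → Fin k, IsDicolouring (inducedRel A U) α → IsDicolouring (inducedRel A U) β →
      (∀ w ∉ U, α w = β w) →
      ∃ l, RedicolPath (inducedRel A U) α β l ∧
        ∀ w, countRecol w (α :: l) ≤ if w ∈ U then cycleDegeneracy A + 1 else 0 := by
  induction U using Finset.strongInduction with
  | H U ih =>
  intro α β hα hβ hαβ
  rcases U.eq_empty_or_nonempty with rfl | hU
  · obtain rfl : α = β := funext fun w => hαβ w (notMem_empty w)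
    exact ⟨[], ⟨List.isChain_singleton α, rfl⟩, by simp⟩
  set d := cycleDegeneracy A
  obtain ⟨v, hvU, S, hvS, hSd, hS⟩ :=
    exists_hitsCyclesThrough_card_le_cycleDegeneracy hU hα.not_rel_self
  have hsub := inducedRel_mono (A := A) (erase_subset v U)
  obtain ⟨l₁, ⟨hl₁, hlast⟩, hcount⟩ := ih (U.erase v) (erase_ssubset hvU) α (update β v (α v))
    (hα.mono hsub) ((hβ.mono hsub).update_of_notMem (notMem_erase v U) _) fun w hw => by
      rcases eq_or_ne w v with rfl | hwv
      · simp
      · simp [update_of_ne hwv, hαβ w fun h => hw (mem_erase.mpr ⟨hwv, h⟩)]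
  have hv : countRecol v (α :: l₁) = 0 := by simpa using hcount v
  have hr : recolouringsOn S (α :: l₁) ≤ d * (d + 1) := calc
    _ ≤ ∑ _u ∈ S, (d + 1) := sum_le_sum fun u _ => (hcount u).trans (by split_ifs <;> omega)
    _ ≤ d * (d + 1) := by rw [sum_const, smul_eq_mul]; exact Nat.mul_le_mul_right _ hSd
  have hb : IsDicolouring (inducedRel A U)
      (update ((α :: l₁).getLast (List.cons_ne_nil _ _)) v (β v)) := by
    rwa [hlast, update_idem, update_eq_self]
  obtain ⟨l, ⟨⟨hl, hlast'⟩, hcount'⟩, hcv⟩ := exists_isLift_of_isDicolouring_update hS hvS hSd hk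
    (hα.mono hsub) hl₁ hv hb hr (y := α v) (by rwa [update_eq_self])
  rw [update_eq_self] at hl hlast' hcount' hcv
  rw [hlast, update_idem, update_eq_self] at hlast'
  refine ⟨l, ⟨hl, hlast'⟩, fun w => ?_⟩
  rcases eq_or_ne w v with rfl | hwv
  · simpa [hvU] using hcv
  · rw [hcount' w hwv]
    refine (hcount w).trans ?_
    by_cases hwU : w ∈ U <;> simp [hwU, hwv]

end Redicolouring

theorem stmt7_general [Fintype V] (A : V → V → Prop) (k : ℕ)
    (hk : 2 * (cycleDegeneracy A + 1) ≤ k) (α β : V → Fin k)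
    (hα : IsDicolouring A α) (hβ : IsDicolouring A β) :
    ∃ l : List (V → Fin k), RedicolPath A α β l ∧
      (∀ v : V, countRecol v (α :: l) ≤ cycleDegeneracy A + 1) ∧
      l.length ≤ (cycleDegeneracy A + 1) * Fintype.card V := by
  classical
  obtain ⟨l, hl, hcount⟩ := exists_redicolPath_inducedRel hk univ α β
    (by rwa [inducedRel_univ]) (by rwa [inducedRel_univ]) (by simp)
  rw [inducedRel_univ] at hl
  have hcount' : ∀ w, countRecol w (α :: l) ≤ cycleDegeneracy A + 1 := by
    simpa using hcount
  refine ⟨l, hl, hcount', ?_⟩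
  calc l.length = ∑ w, countRecol w (α :: l) := length_eq_sum_countRecol hl.1
    _ ≤ ∑ _w : V, (cycleDegeneracy A + 1) := sum_le_sum fun w _ => hcount' w
    _ = _ := by simp [mul_comm]

theorem stmt7 [Fintype V] [DecidableEq V] (A : V → V → Prop) (k : ℕ)
    (hk : 2 * (cycleDegeneracy A + 1) ≤ k) (α β : V → Fin k)
    (hα : IsDicolouring A α) (hβ : IsDicolouring A β) :
    ∃ l : List (V → Fin k), RedicolPath A α β l ∧
      (∀ v : V, countRecol v (α :: l) ≤ cycleDegeneracy A + 1) ∧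
      l.length ≤ (cycleDegeneracy A + 1) * Fintype.card V :=
  stmt7_general A k hk α β hα hβ
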